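/- For integer n ≥ 3 and τ ∈ ℂ \ {0}, let C_n[τ] = [[τ·cot(π/n), −τ/sin(π/n)],[1/(τ·sin(π/n)), −cot(π/n)/τ]]. Then det C_n[τ] = 1 and C_n[τ]⁻¹ A_n C_n[τ] = B_n⁻¹ (up to sign in SL(2,ℂ)), where A_n and B_n are as in the explicit normalization above. -/

import Mathlib

open Real Matrix Complex

noncomputable def A (n : ℕ) : Matrix (Fin 2) (Fin 2) ℂ :=
  !![Complex.exp (-(((π / n : ℝ) : ℂ) * Complex.I)), 0;
     0, Complex.exp (((π / n : ℝ) : ℂ) * Complex.I)]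

noncomputable def B (n : ℕ) : Matrix (Fin 2) (Fin 2) ℂ :=
  !![2 * Complex.I / ((Real.sin (π / n) : ℝ) : ℂ) - Complex.exp (((π / n : ℝ) : ℂ) * Complex.I),
     -2 * Complex.I * ((Real.cos (π / n) / Real.sin (π / n) : ℝ) : ℂ);
     2 * Complex.I * ((Real.cos (π / n) / Real.sin (π / n) : ℝ) : ℂ),
     -2 * Complex.I / ((Real.sin (π / n) : ℝ) : ℂ) - Complex.exp (-(((π / n : ℝ) : ℂ) * Complex.I))]

noncomputable def C (n : ℕ) (τ : ℂ) : Matrix (Fin 2) (Fin 2) ℂ :=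
  !![τ * ((Real.cos (π / n) / Real.sin (π / n) : ℝ) : ℂ), -τ / ((Real.sin (π / n) : ℝ) : ℂ);
     1 / (τ * ((Real.sin (π / n) : ℝ) : ℂ)), -((Real.cos (π / n) / Real.sin (π / n) : ℝ) : ℂ) / τ]

/-
With θ = π/n, c = cos θ, s = sin θ and e = e^{iθ} = c + is, the rows (c, -1) and (1, -c) of C_n[τ]
(up to the factors τ/s and 1/(τs)) are left eigenvectors of B_n for the eigenvalues -e and -e⁻¹.
Hence A_n C_n[τ] B_n = -C_n[τ], and since det C_n[τ] = (1 - c²)/s² = 1, the conjugate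
C_n[τ]⁻¹ A_n C_n[τ] is -B_n⁻¹.
-/

theorem Matrix.inv_mul_mul_eq_neg_inv {m R : Type*} [Fintype m] [DecidableEq m] [CommRing R]
    {A B C : Matrix m m R} (hC : IsUnit C.det) (h : A * C * B = -C) :
    C⁻¹ * A * C = -B⁻¹ := by
  have hleft : -(C⁻¹ * A * C) * B = 1 := by
    rw [neg_mul, Matrix.mul_assoc, Matrix.mul_assoc, ← Matrix.mul_assoc A, h, Matrix.mul_neg,
      nonsing_inv_mul _ hC, neg_neg]
  rw [inv_eq_left_inv hleft, neg_neg]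

theorem Real.sin_pi_div_natCast_pos {n : ℕ} (hn : 2 ≤ n) : 0 < Real.sin (π / n) := by
  apply Real.sin_pos_of_pos_of_lt_pi (by positivity)
  exact div_lt_self Real.pi_pos (by exact_mod_cast hn)

section

variable {K : Type*} [Field K]

def matA (c s i : K) : Matrix (Fin 2) (Fin 2) K :=
  !![c - s * i, 0; 0, c + s * i]

def matB (c s i : K) : Matrix (Fin 2) (Fin 2) K :=
  !![2 * i / s - (c + s * i), -2 * i * (c / s); 2 * i * (c / s), -2 * i / s - (c - s * i)]

def matC (c s τ : K) : Matrix (Fin 2) (Fin 2) K :=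
  !![τ * (c / s), -τ / s; 1 / (τ * s), -(c / s) / τ]

theorem det_matC {c s τ : K} (hcs : s ^ 2 + c ^ 2 = 1) (hs : s ≠ 0) (hτ : τ ≠ 0) :
    (matC c s τ).det = 1 := by
  rw [matC, det_fin_two_of]
  grind

theorem matA_mul_matC_mul_matB {c s i τ : K} (hi : i ^ 2 = -1)
    (hcs : s ^ 2 + c ^ 2 = 1) (hs : s ≠ 0) :
    matA c s i * matC c s τ * matB c s i = -matC c s τ := by
  simp only [matA, matB, matC, mul_fin_two, neg_of, neg_cons, neg_empty,
    EmbeddingLike.apply_eq_iff_eq, vecCons_inj, and_true]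
  refine ⟨⟨?_, ?_⟩, ?_, ?_⟩ <;> grind

end

section

variable (n : ℕ)

local notation "c" => ((Real.cos (π / n) : ℝ) : ℂ)
local notation "s" => ((Real.sin (π / n) : ℝ) : ℂ)

theorem exp_pi_div_mul_I : Complex.exp (((π / n : ℝ) : ℂ) * I) = c + s * I := by
  rw [Complex.exp_mul_I, ← Complex.ofReal_cos, ← Complex.ofReal_sin]

theorem A_eq_matA : A n = matA c s I := by
  rw [A, matA, exp_pi_div_mul_I, ← neg_mul, Complex.exp_mul_I, Complex.cos_neg,
    Complex.sin_neg, ← Complex.ofReal_cos, ← Complex.ofReal_sin]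
  ring_nf

theorem B_eq_matB : B n = matB c s I := by
  rw [B, matB, exp_pi_div_mul_I, ← neg_mul, Complex.exp_mul_I, Complex.cos_neg,
    Complex.sin_neg, ← Complex.ofReal_cos, ← Complex.ofReal_sin, Complex.ofReal_div]
  ring_nf

theorem C_eq_matC (τ : ℂ) : C n τ = matC c s τ := by
  rw [C, matC, Complex.ofReal_div]

end

theorem stmt9 (n : ℕ) (hn : 3 ≤ n) (τ : ℂ) (hτ : τ ≠ 0) :
    (C n τ).det = 1 ∧
    ((C n τ)⁻¹ * A n * C n τ = (B n)⁻¹ ∨ (C n τ)⁻¹ * A n * C n τ = -((B n)⁻¹)) := by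
  have hs : ((Real.sin (π / n) : ℝ) : ℂ) ≠ 0 :=
    Complex.ofReal_ne_zero.mpr (Real.sin_pi_div_natCast_pos (by omega)).ne'
  have hcs : ((Real.sin (π / n) : ℝ) : ℂ) ^ 2 + ((Real.cos (π / n) : ℝ) : ℂ) ^ 2 = 1 := by
    exact_mod_cast Real.sin_sq_add_cos_sq (π / n)
  have hdet : (C n τ).det = 1 := by
    rw [C_eq_matC]
    exact det_matC hcs hs hτ
  refine ⟨hdet, Or.inr (Matrix.inv_mul_mul_eq_neg_inv (by simp [hdet]) ?_)⟩
  rw [A_eq_matA, B_eq_matB, C_eq_matC]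
  exact matA_mul_matC_mul_matB Complex.I_sq hcs hs
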